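/- For every m ≥ 0, the derivation D_m maps the ideal J into itself: D_m(x) ∈ J for every x ∈ J. (Hence each D_m descends to an operation on N = S ⧸ J; this is the statement that the subring N of H*(BG; ℤ/2) is closed under the Milnor operations.) -/

import Mathlib

open MvPolynomial

/-- `S = ℤ/2[a,b,c,d] ≅ H^*(BSO(3)²; ℤ/2)` with `a = w₂'`, `b = w₃'`, `c = w₂''`, `d = w₃''`. -/
noncomputable abbrev S : Type := MvPolynomial (Fin 4) (ZMod 2)

noncomputable def a : S := X 0
noncomputable def b : S := X 1
noncomputable def c : S := X 2
noncomputable def d : S := X 3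

/-- The ideal `J = (a·d + c·b, b·d² + b²·d)` of relations. -/
noncomputable def J : Ideal S := Ideal.span {a * d + c * b, b * d ^ 2 + b ^ 2 * d}

/-- `N = S ⧸ J`, the bottom line of the `E_∞`-term. -/
noncomputable abbrev N : Type := S ⧸ J

/-- The quotient map `π : S → N`. -/
noncomputable def π : S →+* N := Ideal.Quotient.mk J

/-- Values of the Milnor operations `D_m` on the generators `a, b, c, d`:
`D₀ = Q₀` with `D₀(a)=b, D₀(b)=0, D₀(c)=d, D₀(d)=0`;
`D₁ = Q₁` with `D₁(a)=ab, D₁(b)=b², D₁(c)=cd, D₁(d)=d²`;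
and for `m ≥ 2`, `D_m = a^(2^(m−1))·D_{m−1} + b^(2^(m−1))·D_{m−2}` on `a, b`,
and `D_m = c^(2^(m−1))·D_{m−1} + d^(2^(m−1))·D_{m−2}` on `c, d`. -/
noncomputable def Dvals : ℕ → Fin 4 → S
  | 0 => ![b, 0, d, 0]
  | 1 => ![a * b, b ^ 2, c * d, d ^ 2]
  | m + 2 => fun i =>
      if (i : ℕ) < 2 then
        a ^ 2 ^ (m + 1) * Dvals (m + 1) i + b ^ 2 ^ (m + 1) * Dvals m i
      else
        c ^ 2 ^ (m + 1) * Dvals (m + 1) i + d ^ 2 ^ (m + 1) * Dvals m i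

/-- The `m`-th Milnor operation `D_m` on `S ≅ H^*(BSO(3)²; ℤ/2)`, as a derivation. -/
noncomputable def D (m : ℕ) : Derivation (ZMod 2) S S :=
  MvPolynomial.mkDerivation (ZMod 2) (Dvals m)

/-!
On the generators, `D_m a = b·P_m(a,b)`, `D_m b = b²·S_m(a,b)`, `D_m c = d·P_m(c,d)` and
`D_m d = d²·S_m(c,d)`, where `P_m` and `S_m` solve `u_{m+2} = x^{2^{m+1}} u_{m+1} + y^{2^{m+1}} u_m`
with initial values `(1, x)` and `(0, 1)`. Both `b d²·(a + c)` and `b d²·(b + d)` lie in `J`, so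
multiplication by `b d²` kills `F(a,b) - F(c,d)` modulo `J` for every polynomial `F`. This settles
`D_m r₂ = b²d²·(S_m(a,b) + S_m(c,d))` at once. Modulo `J`, `D_m r₁ ≡ b d·(W_m(a,b) + W_m(c,d))`
with `W_m = P_m + x S_m`; here `W_0 = 1`, while `W_{m+1}(x,y) = y²·S_m(x²,y²)` and
`b d·b² ≡ b d·d²` modulo `r₂`, which reduces this case to the previous one.
-/

section MilnorSeq

variable {R : Type*} [CommSemiring R]

def milnorSeq (x y u₀ u₁ : R) : ℕ → R
  | 0 => u₀
  | 1 => u₁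
  | m + 2 =>
    x ^ 2 ^ (m + 1) * milnorSeq x y u₀ u₁ (m + 1) + y ^ 2 ^ (m + 1) * milnorSeq x y u₀ u₁ m

variable (x y : R)

theorem milnorSeq_add_two (u₀ u₁ : R) (m : ℕ) : milnorSeq x y u₀ u₁ (m + 2) =
    x ^ 2 ^ (m + 1) * milnorSeq x y u₀ u₁ (m + 1) + y ^ 2 ^ (m + 1) * milnorSeq x y u₀ u₁ m :=
  rfl

theorem milnorSeq_add (u₀ u₁ v₀ v₁ : R) : ∀ m,
    milnorSeq x y u₀ u₁ m + milnorSeq x y v₀ v₁ m = milnorSeq x y (u₀ + v₀) (u₁ + v₁) m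
  | 0 => rfl
  | 1 => rfl
  | m + 2 => by
    simp only [milnorSeq_add_two, ← milnorSeq_add u₀ u₁ v₀ v₁ m, ← milnorSeq_add u₀ u₁ v₀ v₁ (m + 1)]
    ring

theorem mul_milnorSeq (r u₀ u₁ : R) : ∀ m,
    r * milnorSeq x y u₀ u₁ m = milnorSeq x y (r * u₀) (r * u₁) m
  | 0 => rfl
  | 1 => rfl
  | m + 2 => by
    simp only [milnorSeq_add_two, ← mul_milnorSeq r u₀ u₁ m, ← mul_milnorSeq r u₀ u₁ (m + 1)]
    ring

theorem milnorSeq_succ (u₀ u₁ : R) : ∀ m,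
    milnorSeq x y u₀ u₁ (m + 1) = milnorSeq (x ^ 2) (y ^ 2) u₁ (x ^ 2 * u₁ + y ^ 2 * u₀) m
  | 0 => rfl
  | 1 => by simp [milnorSeq]
  | m + 2 => by
    rw [milnorSeq_add_two (m := m + 1), milnorSeq_succ u₀ u₁ (m + 1), milnorSeq_succ u₀ u₁ m,
      milnorSeq_add_two (x ^ 2), ← pow_mul, ← pow_mul, ← pow_succ']

theorem map_milnorSeq {R' : Type*} [CommSemiring R'] (f : R →+* R') (u₀ u₁ : R) : ∀ m,
    f (milnorSeq x y u₀ u₁ m) = milnorSeq (f x) (f y) (f u₀) (f u₁) m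
  | 0 => rfl
  | 1 => rfl
  | m + 2 => by simp only [milnorSeq_add_two, map_add, map_mul, map_pow, map_milnorSeq f u₀ u₁ m,
      map_milnorSeq f u₀ u₁ (m + 1)]

theorem milnorSeq_one_zero_succ (m : ℕ) :
    milnorSeq x y 1 0 (m + 1) = y ^ 2 * milnorSeq (x ^ 2) (y ^ 2) 0 1 m := by
  rw [milnorSeq_succ, mul_milnorSeq, mul_zero, mul_zero, mul_one, zero_add]

theorem milnorSeq_one_self_add_mul [CharP R 2] (m : ℕ) :
    milnorSeq x y 1 x m + x * milnorSeq x y 0 1 m = milnorSeq x y 1 0 m := by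
  rw [mul_milnorSeq, milnorSeq_add, mul_zero, add_zero, mul_one, CharTwo.add_self_eq_zero]

end MilnorSeq

theorem Derivation.map_mem_span {R A : Type*} [CommSemiring R] [CommSemiring A] [Algebra R A]
    (D : Derivation R A A) {s : Set A} (hs : ∀ g ∈ s, D g ∈ Ideal.span s) {x : A}
    (hx : x ∈ Ideal.span s) : D x ∈ Ideal.span s := by
  induction hx using Submodule.span_induction with
  | mem g hg => exact hs g hg
  | zero => simp
  | add x y _ _ hx hy => simpa only [map_add] using add_mem hx hy
  | smul r x hx ih =>
    rw [smul_eq_mul, Derivation.leibniz]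
    exact add_mem (Ideal.mul_mem_left _ r ih) (Ideal.mul_mem_right _ _ hx)

theorem Dvals_eq : ∀ m, Dvals m = ![b * milnorSeq a b 1 a m, b ^ 2 * milnorSeq a b 0 1 m,
    d * milnorSeq c d 1 c m, d ^ 2 * milnorSeq c d 0 1 m]
  | 0 => by funext i; fin_cases i <;> simp [Dvals, milnorSeq]
  | 1 => by funext i; fin_cases i <;> simp [Dvals, milnorSeq, mul_comm]
  | m + 2 => by
    funext i
    fin_cases i <;> simp [Dvals, milnorSeq_add_two, Dvals_eq m, Dvals_eq (m + 1)] <;> ring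

theorem D_a (m : ℕ) : D m a = b * milnorSeq a b 1 a m := by
  rw [D, a, mkDerivation_X, Dvals_eq]; rfl

theorem D_b (m : ℕ) : D m b = b ^ 2 * milnorSeq a b 0 1 m := by
  rw [D, b, mkDerivation_X, Dvals_eq]; rfl

theorem D_c (m : ℕ) : D m c = d * milnorSeq c d 1 c m := by
  rw [D, c, mkDerivation_X, Dvals_eq]; rfl

theorem D_d (m : ℕ) : D m d = d ^ 2 * milnorSeq c d 0 1 m := by
  rw [D, d, mkDerivation_X, Dvals_eq]; rfl

theorem ad_add_cb_mem_J : a * d + c * b ∈ J := Ideal.subset_span (by simp)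

theorem bd_sq_add_b_sq_d_mem_J : b * d ^ 2 + b ^ 2 * d ∈ J := Ideal.subset_span (by simp)

noncomputable def diagIdeal : Ideal S := Ideal.span {a + c, b + d}

theorem b_mul_d_sq_mul_mem_J {t : S} (ht : t ∈ diagIdeal) : b * d ^ 2 * t ∈ J := by
  obtain ⟨u, v, rfl⟩ := Ideal.mem_span_pair.mp ht
  refine Ideal.mem_span_pair.mpr ⟨u * b * d, u * c + v * d, ?_⟩
  linear_combination (u * b ^ 2 * c * d) * CharTwo.two_eq_zero (R := S)

theorem milnorSeq_pow_add_milnorSeq_pow_mem_diagIdeal (n : ℕ) (u₀ u₁ : S) (m : ℕ) :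
    milnorSeq (a ^ n) (b ^ n) u₀ u₁ m + milnorSeq (c ^ n) (d ^ n) u₀ u₁ m ∈ diagIdeal := by
  have hac : Ideal.Quotient.mk diagIdeal a = Ideal.Quotient.mk diagIdeal c :=
    Ideal.Quotient.eq.mpr (by rw [CharTwo.sub_eq_add]; exact Ideal.subset_span (by simp))
  have hbd : Ideal.Quotient.mk diagIdeal b = Ideal.Quotient.mk diagIdeal d :=
    Ideal.Quotient.eq.mpr (by rw [CharTwo.sub_eq_add]; exact Ideal.subset_span (by simp))
  rw [← CharTwo.sub_eq_add, ← Ideal.Quotient.eq, map_milnorSeq, map_milnorSeq, map_pow, map_pow,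
    map_pow, map_pow, hac, hbd]

theorem D_ad_add_cb (m : ℕ) : D m (a * d + c * b) =
    b * d * (milnorSeq a b 1 0 m + milnorSeq c d 1 0 m) +
      (b * milnorSeq a b 0 1 m + d * milnorSeq c d 0 1 m) * (a * d + c * b) := by
  rw [← milnorSeq_one_self_add_mul, ← milnorSeq_one_self_add_mul, map_add, Derivation.leibniz,
    Derivation.leibniz, D_a, D_b, D_c, D_d, smul_eq_mul, smul_eq_mul, smul_eq_mul, smul_eq_mul]
  linear_combination (-(a * b * d * milnorSeq a b 0 1 m) - b * c * d * milnorSeq c d 0 1 m) *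
    CharTwo.two_eq_zero (R := S)

theorem D_bd_sq_add_b_sq_d (m : ℕ) : D m (b * d ^ 2 + b ^ 2 * d) =
    b * (b * d ^ 2 * (milnorSeq a b 0 1 m + milnorSeq c d 0 1 m)) := by
  rw [map_add, Derivation.leibniz, Derivation.leibniz, Derivation.leibniz_pow,
    Derivation.leibniz_pow, D_b, D_d]
  simp only [smul_eq_mul, nsmul_eq_mul, Nat.cast_ofNat]
  linear_combination (b * d ^ 3 * milnorSeq c d 0 1 m + b ^ 3 * d * milnorSeq a b 0 1 m) *
    CharTwo.two_eq_zero (R := S)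

theorem D_ad_add_cb_mem_J (m : ℕ) : D m (a * d + c * b) ∈ J := by
  rw [D_ad_add_cb]
  refine add_mem ?_ (Ideal.mul_mem_left _ _ ad_add_cb_mem_J)
  cases m with
  | zero => simp [milnorSeq, CharTwo.add_self_eq_zero]
  | succ n =>
    set X := milnorSeq (a ^ 2) (b ^ 2) 0 1 n
    set Y := milnorSeq (c ^ 2) (d ^ 2) 0 1 n
    have hXY : X + Y ∈ diagIdeal := milnorSeq_pow_add_milnorSeq_pow_mem_diagIdeal 2 0 1 n
    have hsplit : b * d * (b ^ 2 * X + d ^ 2 * Y) =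
        d * (b * d ^ 2 * (X + Y)) + (b + d) * X * (b * d ^ 2 + b ^ 2 * d) := by
      linear_combination (-X * (b * d ^ 3 + b ^ 2 * d ^ 2)) * CharTwo.two_eq_zero (R := S)
    rw [milnorSeq_one_zero_succ, milnorSeq_one_zero_succ, hsplit]
    exact add_mem (Ideal.mul_mem_left _ _ (b_mul_d_sq_mul_mem_J hXY))
      (Ideal.mul_mem_left _ _ bd_sq_add_b_sq_d_mem_J)

theorem D_bd_sq_add_b_sq_d_mem_J (m : ℕ) : D m (b * d ^ 2 + b ^ 2 * d) ∈ J := by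
  rw [D_bd_sq_add_b_sq_d]
  exact Ideal.mul_mem_left _ _ (b_mul_d_sq_mul_mem_J (by
    simpa using milnorSeq_pow_add_milnorSeq_pow_mem_diagIdeal 1 0 1 m))

theorem stmt_15 (m : ℕ) (x : S) (hx : x ∈ J) : D m x ∈ J := by
  refine (D m).map_mem_span (fun g hg => ?_) hx
  rcases hg with rfl | rfl
  · exact D_ad_add_cb_mem_J m
  · exact D_bd_sq_add_b_sq_d_mem_J m
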